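/- For every node a belonging to V, the set Vstar(a) computed by the recurrences is feasible for subtree(a): Vstar(a) ⊆ V ∩ subtree(a) and every V-leaf lying in subtree(a) has an ancestor-or-self belonging to Vstar(a). (This is the coverage claim of Theorem 1: the selected nodes collectively cover all spatial objects associated with nodes in V.) -/

import Mathlib

/-!
Theorem 1 of "STREAK": coverage/feasibility of the set `Vstar(a)` computed by
the dynamic-programming recurrences.

Nodes of a finite rooted tree are represented by paths (lists of child indices)
from the root.
-/

open scoped Classical

/-- A finite rooted tree: each node has a finite list of children. -/
inductive RTree : Type where
  | node : List RTree → RTree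

namespace RTree

/-- The subtree reached by following a path of child indices, if it exists. -/
def subAt : RTree → List ℕ → Option RTree
  | t, [] => some t
  | node cs, i :: p =>
    match cs[i]? with
    | some c => subAt c p
    | none => none
termination_by t p => p.length

/-- A path is a node of the tree if following it leads to a subtree. -/
def valid (t : RTree) (p : List ℕ) : Prop := (t.subAt p).isSome

/-- `subtreeOf t p` is the set of nodes of `t` consisting of `p` together with
all of its descendants (nodes whose path extends `p`). -/
def subtreeOf (t : RTree) (p : List ℕ) : Set (List ℕ) :=
  {q | t.valid q ∧ p <+: q}

/-- A node `p ∈ V` is a `V`-leaf if no child of `p` belongs to `V`. -/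
def VLeaf (t : RTree) (V : Set (List ℕ)) (p : List ℕ) : Prop :=
  p ∈ V ∧ t.valid p ∧ ∀ i : ℕ, p ++ [i] ∉ V

/-- `S` is feasible for the subtree rooted at `p`: `S ⊆ V ∩ subtree(p)` and
every `V`-leaf lying in `subtree(p)` has an ancestor-or-self, itself lying in
`subtree(p)`, that belongs to `S`. -/
def Feasible (t : RTree) (V : Set (List ℕ)) (p : List ℕ) (S : Set (List ℕ)) : Prop :=
  S ⊆ V ∩ subtreeOf t p ∧
  ∀ q, VLeaf t V q → q ∈ subtreeOf t p →
    ∃ r ∈ S, r ∈ subtreeOf t p ∧ r <+: q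

/-- The dynamic program of Theorem 1: for the subtree rooted at path `p`,
compute `(Vstar p, sigma p, xistar p)` by the recurrences.  If `p ∉ V` the
value is `(∅, 0, 0)`; if `p` is a `V`-leaf (no child in `V`) it is
`({p}, cost p, xi p)`; otherwise, with `γ` the children of `p` belonging to
`V`, `μ = Σ_{j ∈ γ} xistar j` if `|γ| > 1` and `0` otherwise, the value is
`({p}, cost p, xi p)` when `cost p < μ + Σ_{j ∈ γ} sigma j`, and
`(⋃_{j ∈ γ} Vstar j, Σ_{j ∈ γ} sigma j + μ, Σ_{j ∈ γ} xistar j)` otherwise. -/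
noncomputable def dp (V : Set (List ℕ)) (cost xi : List ℕ → ℝ) :
    RTree → List ℕ → Set (List ℕ) × ℝ × ℝ
  | node cs, p =>
    let recs := (cs.zipIdx.map Prod.swap).attach.map fun x =>
      (p ++ [x.1.1], dp V cost xi x.1.2 (p ++ [x.1.1]))
    if p ∈ V then
      let γ := recs.filter fun r => decide (r.1 ∈ V)
      if γ.isEmpty then ({p}, cost p, xi p)
      else
        let σsum := (γ.map fun r => r.2.2.1).sum
        let ξsum := (γ.map fun r => r.2.2.2).sum
        let μ := if 1 < γ.length then ξsum else 0
        if cost p < μ + σsum then ({p}, cost p, xi p)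
        else (⋃ r ∈ γ, r.2.1, σsum + μ, ξsum)
    else (∅, 0, 0)
termination_by t _ => sizeOf t
decreasing_by
  simp_wf
  have hx : x.1.2 ∈ cs := by
    have h1 : x.1.2 ∈ (cs.zipIdx.map Prod.swap).map Prod.snd := List.mem_map_of_mem x.2
    simpa [List.map_map, Function.comp_def] using h1
  have := List.sizeOf_lt_of_mem hx
  omega

/-- `Vstar a`, for a node `a` of the tree `t`. -/
noncomputable def VstarAt (t : RTree) (V : Set (List ℕ)) (cost xi : List ℕ → ℝ)
    (p : List ℕ) : Set (List ℕ) :=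
  match t.subAt p with
  | some s => (dp V cost xi s p).1
  | none => ∅

end RTree

/-!
Induction on the subtree below `a`. The recurrence leaves `Vstar(a)` either equal to `{a}`,
which is feasible because `a ∈ V`, or equal to the union of `Vstar(j)` over the children `j`
of `a` lying in `V`; in the second case `a` has such a child, so it is not a `V`-leaf, and
every `V`-leaf below `a` lies below one of these children (`V` is ancestor-closed), where the
induction hypothesis covers it. The costs play no role: they only decide which branch is taken.
-/

namespace RTree

variable {t : RTree} {V : Set (List ℕ)}

theorem subAt_append : ∀ (t : RTree) (p q : List ℕ),
    t.subAt (p ++ q) = (t.subAt p).bind fun s => s.subAt q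
  | t, [], q => by simp [subAt]
  | node cs, i :: p, q => by
    simp only [List.cons_append, subAt]
    cases cs[i]? with
    | none => rfl
    | some c => exact subAt_append c p q

theorem subAt_append_singleton {p : List ℕ} {cs : List RTree}
    (h : t.subAt p = some (node cs)) (i : ℕ) : t.subAt (p ++ [i]) = cs[i]? := by
  rw [subAt_append, h]
  simp only [Option.bind_some, subAt]
  split <;> simp_all

theorem subtreeOf_anti {p q : List ℕ} (h : p <+: q) : t.subtreeOf q ⊆ t.subtreeOf p :=
  fun _ ⟨hv, hq⟩ => ⟨hv, h.trans hq⟩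

theorem subtreeOf_eq_empty {p : List ℕ} (hp : t.subAt p = none) : t.subtreeOf p = ∅ := by
  refine Set.eq_empty_of_forall_notMem fun q ⟨hq, l, hl⟩ => ?_
  simp [valid, ← hl, subAt_append, hp] at hq

theorem mem_of_append_mem (hanc : ∀ (p : List ℕ) (i : ℕ), p ++ [i] ∈ V → p ∈ V)
    (p : List ℕ) : ∀ {l : List ℕ}, p ++ l ∈ V → p ∈ V := by
  intro l
  induction l using List.reverseRecOn with
  | nil => simp
  | append_singleton l i ih =>
    intro h
    exact ih (hanc _ i (by simpa using h))

theorem feasible_singleton {p : List ℕ} (hp : p ∈ V) (hvalid : t.valid p) :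
    Feasible t V p {p} :=
  ⟨Set.singleton_subset_iff.mpr ⟨hp, hvalid, List.prefix_refl p⟩,
    fun _ _ hq => ⟨p, rfl, ⟨hvalid, List.prefix_refl p⟩, hq.2⟩⟩

theorem Feasible.iUnion_children (hanc : ∀ (p : List ℕ) (i : ℕ), p ++ [i] ∈ V → p ∈ V)
    {p : List ℕ} {S : ℕ → Set (List ℕ)} (hne : ∃ i, p ++ [i] ∈ V)
    (hS : ∀ i, p ++ [i] ∈ V → Feasible t V (p ++ [i]) (S i)) :
    Feasible t V p (⋃ i, ⋃ (_ : p ++ [i] ∈ V), S i) := by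
  refine ⟨?_, ?_⟩
  · simp only [Set.iUnion_subset_iff]
    intro i hi y hy
    obtain ⟨hyV, hysub⟩ := (hS i hi).1 hy
    exact ⟨hyV, subtreeOf_anti (List.prefix_append p [i]) hysub⟩
  · rintro q hq ⟨hqvalid, l, rfl⟩
    cases l with
    | nil =>
      obtain ⟨i, hi⟩ := hne
      exact absurd (by simpa using hi) (hq.2.2 i)
    | cons i l =>
      have hchild : p ++ i :: l = p ++ [i] ++ l := by simp
      have hi : p ++ [i] ∈ V := mem_of_append_mem hanc _ (hchild ▸ hq.1)
      obtain ⟨r, hr, hrsub, hrq⟩ :=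
        (hS i hi).2 _ hq ⟨hqvalid, hchild ▸ List.prefix_append _ _⟩
      exact ⟨r, Set.mem_biUnion hi hr, subtreeOf_anti (List.prefix_append p [i]) hrsub, hrq⟩

theorem dp_node_fst_eq_singleton_or (cost xi : List ℕ → ℝ) {cs : List RTree} {p : List ℕ}
    (hp : p ∈ V) :
    (dp V cost xi (node cs) p).1 = {p} ∨
      ((∃ i, p ++ [i] ∈ V) ∧ (dp V cost xi (node cs) p).1 =
        ⋃ i, ⋃ (_ : p ++ [i] ∈ V), ⋃ c ∈ cs[i]?, (dp V cost xi c (p ++ [i])).1) := by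
  rw [dp]
  set γ := ((cs.zipIdx.map Prod.swap).attach.map fun x =>
      (p ++ [x.1.1], dp V cost xi x.1.2 (p ++ [x.1.1]))).filter fun r => decide (r.1 ∈ V)
  have mem_γ : ∀ r, r ∈ γ ↔
      ∃ i, p ++ [i] ∈ V ∧ ∃ c ∈ cs[i]?, r = (p ++ [i], dp V cost xi c (p ++ [i])) := by
    intro r
    simp only [γ, List.mem_filter, List.mem_map, List.mem_attach, true_and, Subtype.exists,
      Prod.exists, Prod.swap_prod_mk, Prod.mk.injEq, List.mk_mem_zipIdx_iff_getElem?,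
      decide_eq_true_eq, Option.mem_def]
    constructor
    · rintro ⟨⟨_, _, ⟨_, _, hc, rfl, rfl⟩, rfl⟩, hi⟩
      exact ⟨_, hi, _, hc, rfl⟩
    · rintro ⟨i, hi, c, hc, rfl⟩
      exact ⟨⟨i, c, ⟨c, i, hc, rfl, rfl⟩, rfl⟩, hi⟩
  have hunion : ⋃ r ∈ γ, r.2.1 =
      ⋃ i, ⋃ (_ : p ++ [i] ∈ V), ⋃ c ∈ cs[i]?, (dp V cost xi c (p ++ [i])).1 := by
    ext y
    simp only [Set.mem_iUnion, exists_prop, mem_γ]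
    constructor
    · rintro ⟨_, ⟨i, hi, c, hc, rfl⟩, hy⟩
      exact ⟨i, hi, c, hc, hy⟩
    · rintro ⟨i, hi, c, hc, hy⟩
      exact ⟨_, ⟨i, hi, c, hc, rfl⟩, hy⟩
  simp only [if_pos hp]
  split_ifs with hγ <;> first | exact Or.inl rfl | refine Or.inr ⟨?_, hunion⟩
  all_goals
    obtain ⟨r, hr⟩ := List.exists_mem_of_ne_nil γ (by simpa using hγ)
    obtain ⟨i, hi, -⟩ := (mem_γ r).1 hr
    exact ⟨i, hi⟩

theorem VstarAt_eq_iUnion (cost xi : List ℕ → ℝ) (p : List ℕ) :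
    VstarAt t V cost xi p = ⋃ s ∈ t.subAt p, (dp V cost xi s p).1 := by
  unfold VstarAt
  cases t.subAt p <;> simp

theorem VstarAt_eq_singleton_or (cost xi : List ℕ → ℝ) {p : List ℕ} {cs : List RTree}
    (hs : t.subAt p = some (node cs)) (hp : p ∈ V) :
    VstarAt t V cost xi p = {p} ∨ ((∃ i, p ++ [i] ∈ V) ∧
      VstarAt t V cost xi p = ⋃ i, ⋃ (_ : p ++ [i] ∈ V), VstarAt t V cost xi (p ++ [i])) := by
  simp only [VstarAt_eq_iUnion, hs, subAt_append_singleton hs]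
  simpa using dp_node_fst_eq_singleton_or cost xi hp

theorem feasible_VstarAt_of_subAt_eq_none (cost xi : List ℕ → ℝ) {p : List ℕ}
    (hp : t.subAt p = none) : Feasible t V p (VstarAt t V cost xi p) := by
  simp [Feasible, VstarAt, hp, subtreeOf_eq_empty hp]

theorem feasible_VstarAt (hanc : ∀ (p : List ℕ) (i : ℕ), p ++ [i] ∈ V → p ∈ V)
    (cost xi : List ℕ → ℝ) :
    ∀ (s : RTree) (p : List ℕ), t.subAt p = some s → p ∈ V →
      Feasible t V p (VstarAt t V cost xi p)
  | node cs, p, hs, hp => by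
    rcases VstarAt_eq_singleton_or cost xi hs hp with h | ⟨hne, h⟩
    · rw [h]
      exact feasible_singleton hp (by simp [valid, hs])
    · rw [h]
      refine Feasible.iUnion_children hanc hne fun i hi => ?_
      cases hc : cs[i]? with
      | none =>
        exact feasible_VstarAt_of_subAt_eq_none cost xi (by rw [subAt_append_singleton hs, hc])
      | some c =>
        have hc_mem : c ∈ cs := List.mem_of_getElem? hc
        exact feasible_VstarAt hanc cost xi c (p ++ [i]) (by rw [subAt_append_singleton hs, hc]) hi
termination_by s => s
decreasing_by
  have := List.sizeOf_lt_of_mem hc_mem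
  simp only [node.sizeOf_spec]
  omega

end RTree

open RTree in
theorem streak_dp_feasible_general
    (t : RTree) (V : Set (List ℕ)) (cost xi : List ℕ → ℝ)
    (hanc : ∀ (p : List ℕ) (i : ℕ), p ++ [i] ∈ V → p ∈ V) :
    ∀ a : List ℕ, t.valid a → a ∈ V →
      Feasible t V a (VstarAt t V cost xi a) := by
  intro a ha haV
  obtain ⟨s, hs⟩ := Option.isSome_iff_exists.mp ha
  exact feasible_VstarAt hanc cost xi s a hs haV

open RTree in
/-- For every node `a ∈ V`, the set `Vstar(a)` computed by the recurrences is
feasible for `subtree(a)`: `Vstar(a) ⊆ V ∩ subtree(a)` and every `V`-leaf lying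
in `subtree(a)` has an ancestor-or-self belonging to `Vstar(a)` (the coverage
claim of Theorem 1). -/
theorem streak_dp_feasible
    (t : RTree) (V : Set (List ℕ)) (cost xi : List ℕ → ℝ)
    (hVnodes : ∀ p ∈ V, t.valid p)
    (hanc : ∀ (p : List ℕ) (i : ℕ), p ++ [i] ∈ V → p ∈ V)
    (hcost : ∀ p, 0 ≤ cost p) (hxi : ∀ p, 0 ≤ xi p) :
    ∀ a : List ℕ, t.valid a → a ∈ V →
      Feasible t V a (VstarAt t V cost xi a) :=
  streak_dp_feasible_general t V cost xi hanc
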